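/- arXiv:1405.7863 — 6 statements merged into one kernel-verified Lean document; each statement's English description precedes it below -/
import Mathlib

section
/- Let A = (A, m_A, u_A, δ_A, ε_A) and B = (B, m_B, u_B, δ_B, ε_B) be Frobenius algebras in a braided monoidal category C. Then the braided product A ×⁺ B = (A ⊗ B, m_×, u_×, δ_×, ε_×) is again a Frobenius algebra: m_× is associative with two-sided unit u_×, δ_× is coassociative with counit ε_×, and the Frobenius law holds for the pair (m_×, δ_×). (This is the statement that the braided product of two Q-systems is a Q-system.) -/
open CategoryTheory MonoidalCategory

/-- A Frobenius algebra (the categorical content of a Q-system) in a monoidal category: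
an object which is simultaneously a monoid and a comonoid, satisfying the Frobenius law. -/
structure FrobeniusAlgebra (C : Type*) [Category C] [MonoidalCategory C] where
  X : C
  mul : X ⊗ X ⟶ X
  one : 𝟙_ C ⟶ X
  comul : X ⟶ X ⊗ X
  counit : X ⟶ 𝟙_ C
  mul_assoc' : (mul ⊗ₘ 𝟙 X) ≫ mul = (α_ X X X).hom ≫ (𝟙 X ⊗ₘ mul) ≫ mul
  one_mul' : (one ⊗ₘ 𝟙 X) ≫ mul = (λ_ X).hom
  mul_one' : (𝟙 X ⊗ₘ one) ≫ mul = (ρ_ X).hom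
  comul_coassoc' : comul ≫ (comul ⊗ₘ 𝟙 X) ≫ (α_ X X X).hom = comul ≫ (𝟙 X ⊗ₘ comul)
  counit_comul' : comul ≫ (counit ⊗ₘ 𝟙 X) = (λ_ X).inv
  comul_counit' : comul ≫ (𝟙 X ⊗ₘ counit) = (ρ_ X).inv
  frobenius_left' : (comul ⊗ₘ 𝟙 X) ≫ (α_ X X X).hom ≫ (𝟙 X ⊗ₘ mul) = mul ≫ comul
  frobenius_right' : mul ≫ comul = (𝟙 X ⊗ₘ comul) ≫ (α_ X X X).inv ≫ (mul ⊗ₘ 𝟙 X)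

variable {C : Type*} [Category C] [MonoidalCategory C] [BraidedCategory C]

/-- The multiplication of the braided product `A ×⁺ B`: rebracket, apply
`id_A ⊗ (β_{A,B})⁻¹ ⊗ id_B` to the middle factors `B ⊗ A`, rebracket, apply `m_A ⊗ m_B`. -/
noncomputable def bpMul (A B : FrobeniusAlgebra C) :
    (A.X ⊗ B.X) ⊗ (A.X ⊗ B.X) ⟶ A.X ⊗ B.X :=
  (α_ A.X B.X (A.X ⊗ B.X)).hom ≫
    (A.X ◁ (α_ B.X A.X B.X).inv) ≫
    (A.X ◁ ((β_ A.X B.X).inv ▷ B.X)) ≫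
    (A.X ◁ (α_ A.X B.X B.X).hom) ≫
    (α_ A.X A.X (B.X ⊗ B.X)).inv ≫ (A.mul ⊗ₘ B.mul)

/-- The unit of the braided product `A ×⁺ B`. -/
noncomputable def bpOne (A B : FrobeniusAlgebra C) : 𝟙_ C ⟶ A.X ⊗ B.X :=
  (λ_ (𝟙_ C)).inv ≫ (A.one ⊗ₘ B.one)

/-- The comultiplication of the braided product `A ×⁺ B`: apply `δ_A ⊗ δ_B`, rebracket,
apply `id_A ⊗ β_{A,B} ⊗ id_B` to the middle factors `A ⊗ B`, and rebracket. -/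
noncomputable def bpComul (A B : FrobeniusAlgebra C) :
    A.X ⊗ B.X ⟶ (A.X ⊗ B.X) ⊗ (A.X ⊗ B.X) :=
  (A.comul ⊗ₘ B.comul) ≫
    (α_ A.X A.X (B.X ⊗ B.X)).hom ≫
    (A.X ◁ (α_ A.X B.X B.X).inv) ≫
    (A.X ◁ ((β_ A.X B.X).hom ▷ B.X)) ≫
    (A.X ◁ (α_ B.X A.X B.X).hom) ≫
    (α_ A.X B.X (A.X ⊗ B.X)).inv

/-- The counit of the braided product `A ×⁺ B`. -/
noncomputable def bpCounit (A B : FrobeniusAlgebra C) : A.X ⊗ B.X ⟶ 𝟙_ C :=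
  (A.counit ⊗ₘ B.counit) ≫ (λ_ (𝟙_ C)).hom

/-! The monoid part of `A ×⁺ B` is Mathlib's tensor product of monoids for the reverse braiding,
and its comonoid part the tensor product of comonoids for `β` itself, so those six laws come for
free. For the Frobenius laws write `m_× = tensorδ ≫ (m_A ⊗ m_B)` and
`δ_× = (δ_A ⊗ δ_B) ≫ tensorμ`. By naturality of `tensorμ` and `tensorδ`, the composite
`(δ_× ▷ _) ≫ α ≫ (_ ◁ m_×)` is `tensorδ ≫ (F_A ⊗ F_B) ≫ tensorμ` with
`F = (δ ▷ _) ≫ α ≫ (_ ◁ m)`, provided the crossing added by `δ_×` and the one added by `m_×`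
can be slid past each other. The Frobenius laws of `A` and `B` then turn `F_A ⊗ F_B` into
`(m_A ≫ δ_A) ⊗ (m_B ≫ δ_B)`, which is `m_× ≫ δ_×`. -/

namespace CategoryTheory.MonoidalCategory

section Monoidal

variable {D : Type*} [Category D] [MonoidalCategory D]

def frobeniusLeft {X Y Z W V : D} (d : X ⟶ Y ⊗ Z) (m : Z ⊗ W ⟶ V) : X ⊗ W ⟶ Y ⊗ V :=
  d ▷ W ≫ (α_ Y Z W).hom ≫ Y ◁ m

def frobeniusRight {X Y Z W V : D} (d : W ⟶ Z ⊗ V) (m : X ⊗ Z ⟶ Y) : X ⊗ W ⟶ Y ⊗ V :=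
  X ◁ d ≫ (α_ X Z V).inv ≫ m ▷ V

end Monoidal

open BraidedCategory

theorem tensorδ_eq_tensorμ_reverseBraiding (X₁ X₂ Y₁ Y₂ : C) :
    tensorδ X₁ X₂ Y₁ Y₂ = @tensorμ C _ _ (reverseBraiding C) X₁ Y₁ X₂ Y₂ :=
  rfl

theorem tensorδ_natural {X₁ X₂ Y₁ Y₂ U₁ U₂ V₁ V₂ : C} (f₁ : X₁ ⟶ Y₁) (f₂ : X₂ ⟶ Y₂)
    (g₁ : U₁ ⟶ V₁) (g₂ : U₂ ⟶ V₂) :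
    ((f₁ ⊗ₘ g₁) ⊗ₘ f₂ ⊗ₘ g₂) ≫ tensorδ Y₁ Y₂ V₁ V₂ =
      tensorδ X₁ X₂ U₁ U₂ ≫ ((f₁ ⊗ₘ f₂) ⊗ₘ g₁ ⊗ₘ g₂) := by
  rw [← Category.id_comp ((_ ⊗ₘ _) ≫ _), ← tensorδ_tensorμ X₁ X₂ U₁ U₂, Category.assoc,
    ← tensorμ_natural_assoc, tensorμ_tensorδ, Category.comp_id]

/- On the right, `X₃` first crosses `Y₂` and `Y₁` backwards and then `Y₁` forwards again;
cancelling that pair leaves the two crossings of the left, in the other order. -/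
theorem tensorμ_whiskerRight_associator_whiskerLeft_tensorδ (X₁ X₂ X₃ Y₁ Y₂ Y₃ : C) :
    tensorμ X₁ X₂ Y₁ Y₂ ▷ (X₃ ⊗ Y₃) ≫ (α_ _ _ _).hom ≫ (X₁ ⊗ Y₁) ◁ tensorδ X₂ X₃ Y₂ Y₃ =
      tensorδ (X₁ ⊗ X₂) X₃ (Y₁ ⊗ Y₂) Y₃ ≫ ((α_ X₁ X₂ X₃).hom ⊗ₘ (α_ Y₁ Y₂ Y₃).hom) ≫
        tensorμ X₁ (X₂ ⊗ X₃) Y₁ (Y₂ ⊗ Y₃) :=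
  calc _ = 𝟙 _ ⊗≫ X₁ ◁ ((β_ X₂ Y₁).hom ▷ (Y₂ ⊗ X₃) ≫ (Y₁ ⊗ X₂) ◁ (β_ X₃ Y₂).inv) ▷ Y₃ ⊗≫
          𝟙 _ := by
        simp only [tensorμ, tensorδ]; monoidal
    _ = 𝟙 _ ⊗≫ (X₁ ⊗ X₂ ⊗ Y₁) ◁ (β_ X₃ Y₂).inv ▷ Y₃ ⊗≫
          (X₁ ⊗ X₂) ◁ ((β_ X₃ Y₁).inv ≫ (β_ X₃ Y₁).hom) ▷ (Y₂ ⊗ Y₃) ⊗≫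
          X₁ ◁ (β_ X₂ Y₁).hom ▷ (X₃ ⊗ Y₂ ⊗ Y₃) ⊗≫ 𝟙 _ := by
        rw [← whisker_exchange, Iso.inv_hom_id]; monoidal
    _ = _ := by
        simp only [tensorμ, tensorδ, braiding_tensor_right_inv, braiding_tensor_left_hom]
        monoidal

theorem whiskerLeft_tensorμ_associator_inv_tensorδ_whiskerRight (X₁ X₂ X₃ Y₁ Y₂ Y₃ : C) :
    (X₁ ⊗ Y₁) ◁ tensorμ X₂ X₃ Y₂ Y₃ ≫ (α_ _ _ _).inv ≫ tensorδ X₁ X₂ Y₁ Y₂ ▷ (X₃ ⊗ Y₃) =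
      tensorδ X₁ (X₂ ⊗ X₃) Y₁ (Y₂ ⊗ Y₃) ≫ ((α_ X₁ X₂ X₃).inv ⊗ₘ (α_ Y₁ Y₂ Y₃).inv) ≫
        tensorμ (X₁ ⊗ X₂) X₃ (Y₁ ⊗ Y₂) Y₃ :=
  calc _ = 𝟙 _ ⊗≫ X₁ ◁ ((Y₁ ⊗ X₂) ◁ (β_ X₃ Y₂).hom ≫ (β_ X₂ Y₁).inv ▷ (Y₂ ⊗ X₃)) ▷ Y₃ ⊗≫
          𝟙 _ := by
        simp only [tensorμ, tensorδ]; monoidal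
    _ = 𝟙 _ ⊗≫ X₁ ◁ (β_ X₂ Y₁).inv ▷ (X₃ ⊗ Y₂ ⊗ Y₃) ⊗≫
          (X₁ ⊗ X₂) ◁ ((β_ X₃ Y₁).inv ≫ (β_ X₃ Y₁).hom) ▷ (Y₂ ⊗ Y₃) ⊗≫
          (X₁ ⊗ X₂ ⊗ Y₁) ◁ (β_ X₃ Y₂).hom ▷ Y₃ ⊗≫ 𝟙 _ := by
        rw [whisker_exchange, Iso.inv_hom_id]; monoidal
    _ = _ := by
        simp only [tensorμ, tensorδ, braiding_tensor_left_inv, braiding_tensor_right_hom]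
        monoidal

theorem frobeniusLeft_tensorμ_tensorδ {X₁ X₂ Y₁ Y₂ Z₁ Z₂ W₁ W₂ V₁ V₂ : C}
    (d₁ : X₁ ⟶ Y₁ ⊗ Z₁) (m₁ : Z₁ ⊗ W₁ ⟶ V₁) (d₂ : X₂ ⟶ Y₂ ⊗ Z₂) (m₂ : Z₂ ⊗ W₂ ⟶ V₂) :
    frobeniusLeft ((d₁ ⊗ₘ d₂) ≫ tensorμ Y₁ Z₁ Y₂ Z₂) (tensorδ Z₁ W₁ Z₂ W₂ ≫ (m₁ ⊗ₘ m₂)) =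
      tensorδ X₁ W₁ X₂ W₂ ≫ (frobeniusLeft d₁ m₁ ⊗ₘ frobeniusLeft d₂ m₂) ≫
        tensorμ Y₁ V₁ Y₂ V₂ := by
  have hd := tensorδ_natural d₁ (𝟙 W₁) d₂ (𝟙 W₂)
  have hm := tensorμ_natural (𝟙 Y₁) m₁ (𝟙 Y₂) m₂
  simp only [tensorHom_id, id_tensorHom, id_whiskerRight] at hd hm
  calc _ = (d₁ ⊗ₘ d₂) ▷ (W₁ ⊗ W₂) ≫ (tensorμ Y₁ Z₁ Y₂ Z₂ ▷ (W₁ ⊗ W₂) ≫ (α_ _ _ _).hom ≫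
          (Y₁ ⊗ Y₂) ◁ tensorδ Z₁ W₁ Z₂ W₂) ≫ (Y₁ ⊗ Y₂) ◁ (m₁ ⊗ₘ m₂) := by
        simp only [frobeniusLeft, comp_whiskerRight, whiskerLeft_comp, Category.assoc]
    _ = tensorδ X₁ W₁ X₂ W₂ ≫ (d₁ ▷ W₁ ⊗ₘ d₂ ▷ W₂) ≫ ((α_ _ _ _).hom ⊗ₘ (α_ _ _ _).hom) ≫
          (Y₁ ◁ m₁ ⊗ₘ Y₂ ◁ m₂) ≫ tensorμ Y₁ V₁ Y₂ V₂ := by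
        simp only [tensorμ_whiskerRight_associator_whiskerLeft_tensorδ, Category.assoc,
          reassoc_of% hd, hm]
    _ = _ := by simp only [frobeniusLeft, tensorHom_comp_tensorHom_assoc]

theorem frobeniusRight_tensorμ_tensorδ {X₁ X₂ Y₁ Y₂ Z₁ Z₂ W₁ W₂ V₁ V₂ : C}
    (d₁ : W₁ ⟶ Z₁ ⊗ V₁) (m₁ : X₁ ⊗ Z₁ ⟶ Y₁) (d₂ : W₂ ⟶ Z₂ ⊗ V₂) (m₂ : X₂ ⊗ Z₂ ⟶ Y₂) :
    frobeniusRight ((d₁ ⊗ₘ d₂) ≫ tensorμ Z₁ V₁ Z₂ V₂) (tensorδ X₁ Z₁ X₂ Z₂ ≫ (m₁ ⊗ₘ m₂)) =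
      tensorδ X₁ W₁ X₂ W₂ ≫ (frobeniusRight d₁ m₁ ⊗ₘ frobeniusRight d₂ m₂) ≫
        tensorμ Y₁ V₁ Y₂ V₂ := by
  have hd := tensorδ_natural (𝟙 X₁) d₁ (𝟙 X₂) d₂
  have hm := tensorμ_natural m₁ (𝟙 V₁) m₂ (𝟙 V₂)
  simp only [tensorHom_id, id_tensorHom, id_whiskerRight] at hd hm
  calc _ = (X₁ ⊗ X₂) ◁ (d₁ ⊗ₘ d₂) ≫ ((X₁ ⊗ X₂) ◁ tensorμ Z₁ V₁ Z₂ V₂ ≫ (α_ _ _ _).inv ≫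
          tensorδ X₁ Z₁ X₂ Z₂ ▷ (V₁ ⊗ V₂)) ≫ (m₁ ⊗ₘ m₂) ▷ (V₁ ⊗ V₂) := by
        simp only [frobeniusRight, comp_whiskerRight, whiskerLeft_comp, Category.assoc]
    _ = tensorδ X₁ W₁ X₂ W₂ ≫ (X₁ ◁ d₁ ⊗ₘ X₂ ◁ d₂) ≫ ((α_ _ _ _).inv ⊗ₘ (α_ _ _ _).inv) ≫
          (m₁ ▷ V₁ ⊗ₘ m₂ ▷ V₂) ≫ tensorμ Y₁ V₁ Y₂ V₂ := by
        simp only [whiskerLeft_tensorμ_associator_inv_tensorδ_whiskerRight, Category.assoc,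
          reassoc_of% hd, hm]
    _ = _ := by simp only [frobeniusRight, tensorHom_comp_tensorHom_assoc]

end CategoryTheory.MonoidalCategory

namespace FrobeniusAlgebra

section Monoidal

variable {D : Type*} [Category D] [MonoidalCategory D] (A : FrobeniusAlgebra D)

@[simps]
abbrev monObj : MonObj A.X where
  one := A.one
  mul := A.mul
  one_mul := by rw [← tensorHom_id, A.one_mul']
  mul_one := by rw [← id_tensorHom, A.mul_one']
  mul_assoc := by rw [← tensorHom_id, ← id_tensorHom, A.mul_assoc']

@[simps]
abbrev comonObj : ComonObj A.X where
  counit := A.counit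
  comul := A.comul
  counit_comul := by rw [← tensorHom_id, A.counit_comul']
  comul_counit := by rw [← id_tensorHom, A.comul_counit']
  comul_assoc := by rw [← id_tensorHom, ← tensorHom_id, A.comul_coassoc']

theorem frobeniusLeft_comul_mul : frobeniusLeft A.comul A.mul = A.mul ≫ A.comul := by
  rw [frobeniusLeft, ← tensorHom_id, ← id_tensorHom, A.frobenius_left']

theorem frobeniusRight_comul_mul : frobeniusRight A.comul A.mul = A.mul ≫ A.comul := by
  rw [frobeniusRight, ← tensorHom_id, ← id_tensorHom, A.frobenius_right']

end Monoidal

end FrobeniusAlgebra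

section BraidedProduct

open FrobeniusAlgebra

variable (A B : FrobeniusAlgebra C)

theorem bpMul_eq_tensorδ : bpMul A B = tensorδ A.X A.X B.X B.X ≫ (A.mul ⊗ₘ B.mul) := by
  simp only [bpMul, tensorδ, Category.assoc]

theorem bpComul_eq_tensorμ : bpComul A B = (A.comul ⊗ₘ B.comul) ≫ tensorμ A.X A.X B.X B.X :=
  rfl

theorem bpMul_assoc :
    bpMul A B ▷ (A.X ⊗ B.X) ≫ bpMul A B =
      (α_ _ _ _).hom ≫ (A.X ⊗ B.X) ◁ bpMul A B ≫ bpMul A B := by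
  simpa only [bpMul_eq_tensorδ, tensorδ_eq_tensorμ_reverseBraiding, monObj_mul] using
    @MonObj.Mon_tensor_mul_assoc C _ _ (reverseBraiding C) A.X B.X A.monObj B.monObj

theorem bpOne_mul : bpOne A B ▷ (A.X ⊗ B.X) ≫ bpMul A B = (λ_ (A.X ⊗ B.X)).hom := by
  simpa only [bpMul_eq_tensorδ, tensorδ_eq_tensorμ_reverseBraiding, monObj_mul, monObj_one,
    bpOne] using
    @MonObj.Mon_tensor_one_mul C _ _ (reverseBraiding C) A.X B.X A.monObj B.monObj

theorem bpMul_one : (A.X ⊗ B.X) ◁ bpOne A B ≫ bpMul A B = (ρ_ (A.X ⊗ B.X)).hom := by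
  simpa only [bpMul_eq_tensorδ, tensorδ_eq_tensorμ_reverseBraiding, monObj_mul, monObj_one,
    bpOne] using
    @MonObj.Mon_tensor_mul_one C _ _ (reverseBraiding C) A.X B.X A.monObj B.monObj

theorem bpComul_coassoc :
    bpComul A B ≫ bpComul A B ▷ (A.X ⊗ B.X) ≫ (α_ _ _ _).hom =
      bpComul A B ≫ (A.X ⊗ B.X) ◁ bpComul A B := by
  let := A.comonObj
  let := B.comonObj
  simpa only [Comon.tensorObj_comul, comonObj_comul, ← bpComul_eq_tensorμ] using
    (ComonObj.comul_assoc (A.X ⊗ B.X)).symm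

theorem bpCounit_comul : bpComul A B ≫ bpCounit A B ▷ (A.X ⊗ B.X) = (λ_ (A.X ⊗ B.X)).inv := by
  let := A.comonObj
  let := B.comonObj
  simpa only [Comon.tensorObj_comul, Comon.tensorObj_counit, comonObj_comul, comonObj_counit,
    bpCounit, ← bpComul_eq_tensorμ] using ComonObj.counit_comul (A.X ⊗ B.X)

theorem bpComul_counit : bpComul A B ≫ (A.X ⊗ B.X) ◁ bpCounit A B = (ρ_ (A.X ⊗ B.X)).inv := by
  let := A.comonObj
  let := B.comonObj
  simpa only [Comon.tensorObj_comul, Comon.tensorObj_counit, comonObj_comul, comonObj_counit,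
    bpCounit, ← bpComul_eq_tensorμ] using ComonObj.comul_counit (A.X ⊗ B.X)

theorem frobeniusLeft_bpComul_bpMul :
    frobeniusLeft (bpComul A B) (bpMul A B) = bpMul A B ≫ bpComul A B := by
  rw [bpComul_eq_tensorμ, bpMul_eq_tensorδ, frobeniusLeft_tensorμ_tensorδ,
    A.frobeniusLeft_comul_mul, B.frobeniusLeft_comul_mul]
  simp only [tensorHom_comp_tensorHom_assoc, Category.assoc]

theorem frobeniusRight_bpComul_bpMul :
    frobeniusRight (bpComul A B) (bpMul A B) = bpMul A B ≫ bpComul A B := by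
  rw [bpComul_eq_tensorμ, bpMul_eq_tensorδ, frobeniusRight_tensorμ_tensorδ,
    A.frobeniusRight_comul_mul, B.frobeniusRight_comul_mul]
  simp only [tensorHom_comp_tensorHom_assoc, Category.assoc]

end BraidedProduct

/-- The braided product `A ×⁺ B` of two Frobenius algebras (Q-systems) in a braided
monoidal category is again a Frobenius algebra: its multiplication is associative with
two-sided unit, its comultiplication is coassociative with counit, and the Frobenius
law holds. -/
theorem braidedProduct_isFrobeniusAlgebra (A B : FrobeniusAlgebra C) :
    ((bpMul A B ⊗ₘ 𝟙 (A.X ⊗ B.X)) ≫ bpMul A B =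
      (α_ (A.X ⊗ B.X) (A.X ⊗ B.X) (A.X ⊗ B.X)).hom ≫
        (𝟙 (A.X ⊗ B.X) ⊗ₘ bpMul A B) ≫ bpMul A B) ∧
    ((bpOne A B ⊗ₘ 𝟙 (A.X ⊗ B.X)) ≫ bpMul A B = (λ_ (A.X ⊗ B.X)).hom) ∧
    ((𝟙 (A.X ⊗ B.X) ⊗ₘ bpOne A B) ≫ bpMul A B = (ρ_ (A.X ⊗ B.X)).hom) ∧
    (bpComul A B ≫ (bpComul A B ⊗ₘ 𝟙 (A.X ⊗ B.X)) ≫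
        (α_ (A.X ⊗ B.X) (A.X ⊗ B.X) (A.X ⊗ B.X)).hom =
      bpComul A B ≫ (𝟙 (A.X ⊗ B.X) ⊗ₘ bpComul A B)) ∧
    (bpComul A B ≫ (bpCounit A B ⊗ₘ 𝟙 (A.X ⊗ B.X)) = (λ_ (A.X ⊗ B.X)).inv) ∧
    (bpComul A B ≫ (𝟙 (A.X ⊗ B.X) ⊗ₘ bpCounit A B) = (ρ_ (A.X ⊗ B.X)).inv) ∧
    ((bpComul A B ⊗ₘ 𝟙 (A.X ⊗ B.X)) ≫
        (α_ (A.X ⊗ B.X) (A.X ⊗ B.X) (A.X ⊗ B.X)).hom ≫ (𝟙 (A.X ⊗ B.X) ⊗ₘ bpMul A B) =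
      bpMul A B ≫ bpComul A B) ∧
    (bpMul A B ≫ bpComul A B =
      (𝟙 (A.X ⊗ B.X) ⊗ₘ bpComul A B) ≫
        (α_ (A.X ⊗ B.X) (A.X ⊗ B.X) (A.X ⊗ B.X)).inv ≫ (bpMul A B ⊗ₘ 𝟙 (A.X ⊗ B.X))) := by
  simp only [tensorHom_id, id_tensorHom]
  exact ⟨bpMul_assoc A B, bpOne_mul A B, bpMul_one A B, bpComul_coassoc A B, bpCounit_comul A B,
    bpComul_counit A B, frobeniusLeft_bpComul_bpMul A B, (frobeniusRight_bpComul_bpMul A B).symm⟩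
end

section
/- For Frobenius algebras A and B in a braided monoidal category and their braided product A ×⁺ B, the embeddings ι_A and ι_B are morphisms of monoid objects into the braided product: u_A ≫ ι_A = u_× and (ι_A ⊗ ι_A) ≫ m_× = m_A ≫ ι_A, and likewise u_B ≫ ι_B = u_× and (ι_B ⊗ ι_B) ≫ m_× = m_B ≫ ι_B. (This expresses that both factor Q-systems are intermediate Q-systems of their braided product.) -/
open CategoryTheory MonoidalCategory

variable {C : Type*} [Category C] [MonoidalCategory C] [BraidedCategory C]

/-- The embedding `ι_A : A ⟶ A ⊗ B` of the first factor into the braided product. -/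
noncomputable def bpIotaA (A B : FrobeniusAlgebra C) : A.X ⟶ A.X ⊗ B.X :=
  (ρ_ A.X).inv ≫ (𝟙 A.X ⊗ₘ B.one)

/-- The embedding `ι_B : B ⟶ A ⊗ B` of the second factor into the braided product. -/
noncomputable def bpIotaB (A B : FrobeniusAlgebra C) : B.X ⟶ A.X ⊗ B.X :=
  (λ_ B.X).inv ≫ (A.one ⊗ₘ 𝟙 B.X)

/-!
The multiplication of `A ×⁺ B` is that of the tensor product monoid `A ⊗ B` for the reverse
braiding `(X, Y) ↦ (β_{Y,X})⁻¹`. The unit of a monoid is a monoid morphism out of `𝟙_ C`,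
hence in any braided category so are `M ◁ η[N]` and `η[M] ▷ N`, and composing with the unitors (which are
monoid isomorphisms) shows that `ι_A` and `ι_B` preserve unit and multiplication.
-/

open MonObj

omit [BraidedCategory C] in
instance FrobeniusAlgebra.instMonObj (A : FrobeniusAlgebra C) : MonObj A.X where
  one := A.one
  mul := A.mul
  one_mul := by simpa [MonoidalCategory.tensorHom_def] using A.one_mul'
  mul_one := by simpa [MonoidalCategory.tensorHom_def] using A.mul_one'
  mul_assoc := by simpa [MonoidalCategory.tensorHom_def] using A.mul_assoc'

namespace MonObj

variable (M N : C) [MonObj M] [MonObj N]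

omit [BraidedCategory C] in
instance isMonHom_one : IsMonHom η[M] :=
  inferInstanceAs (IsMonHom (default : Mon.trivial C ⟶ Mon.mk M).hom)

theorem isMonHom_rightUnitor_inv_whiskerLeft_one : IsMonHom ((ρ_ M).inv ≫ M ◁ η[N]) :=
  inferInstance

theorem isMonHom_leftUnitor_inv_one_whiskerRight : IsMonHom ((λ_ N).inv ≫ η[M] ▷ N) :=
  inferInstance

end MonObj

abbrev bpMonObj (A B : FrobeniusAlgebra C) : MonObj (A.X ⊗ B.X) :=
  @Mon.instMonObjTensorObj C _ _ (reverseBraiding C) A.X B.X _ _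

theorem bpMonObj_one (A B : FrobeniusAlgebra C) : (bpMonObj A B).one = bpOne A B := rfl

theorem bpMonObj_mul (A B : FrobeniusAlgebra C) : (bpMonObj A B).mul = bpMul A B := by
  simp only [MonObj.tensorObj.mul_def, tensorμ, Category.assoc]
  rfl

theorem isMonHom_bpIotaA (A B : FrobeniusAlgebra C) :
    let := bpMonObj A B; IsMonHom (bpIotaA A B) := by
  rw [bpIotaA, id_tensorHom]
  exact @isMonHom_rightUnitor_inv_whiskerLeft_one _ _ _ (reverseBraiding C) _ _ _ _

theorem isMonHom_bpIotaB (A B : FrobeniusAlgebra C) :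
    let := bpMonObj A B; IsMonHom (bpIotaB A B) := by
  rw [bpIotaB, tensorHom_id]
  exact @isMonHom_leftUnitor_inv_one_whiskerRight _ _ _ (reverseBraiding C) _ _ _ _

/-- The embeddings `ι_A` and `ι_B` are morphisms of monoid objects into the braided
product `A ×⁺ B`: both factor Q-systems are intermediate Q-systems of their braided
product. -/
theorem embeddings_are_monoid_morphisms (A B : FrobeniusAlgebra C) :
    (A.one ≫ bpIotaA A B = bpOne A B) ∧
    ((bpIotaA A B ⊗ₘ bpIotaA A B) ≫ bpMul A B = A.mul ≫ bpIotaA A B) ∧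
    (B.one ≫ bpIotaB A B = bpOne A B) ∧
    ((bpIotaB A B ⊗ₘ bpIotaB A B) ≫ bpMul A B = B.mul ≫ bpIotaB A B) := by
  let := bpMonObj A B
  have hA := isMonHom_bpIotaA A B
  have hB := isMonHom_bpIotaB A B
  rw [← bpMonObj_one, ← bpMonObj_mul]
  exact ⟨hA.one_hom, hA.mul_hom.symm, hB.one_hom, hB.mul_hom.symm⟩
end

section
/- For Frobenius algebras A and B in a braided monoidal category, the braiding β_{A,B} : A ⊗ B ⟶ B ⊗ A is an isomorphism of Frobenius algebras from the braided product A ×⁺ B to the opposite braided product B ×⁻ A: it intertwines the units (u_{×⁺} ≫ β_{A,B} = u_{×⁻}), the counits (β_{A,B} ≫ ε_{×⁻} = ε_{×⁺}), the multiplications ((β_{A,B} ⊗ β_{A,B}) ≫ m_{×⁻} = m_{×⁺} ≫ β_{A,B}), and the comultiplications (δ_{×⁺} ≫ (β_{A,B} ⊗ β_{A,B}) = β_{A,B} ≫ δ_{×⁻}). (This is the remark that A₁ ×⁺ A₂ is unitarily equivalent to A₂ ×⁻ A₁ via the braiding.) -/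
open CategoryTheory MonoidalCategory

variable {C : Type*} [Category C] [MonoidalCategory C] [BraidedCategory C]

/-- The multiplication of the opposite braided product `B ×⁻ A`: rebracket, apply
`id_B ⊗ β_{A,B} ⊗ id_A` to the middle factors `A ⊗ B`, rebracket, apply `m_B ⊗ m_A`. -/
noncomputable def bpMulNeg (A B : FrobeniusAlgebra C) :
    (B.X ⊗ A.X) ⊗ (B.X ⊗ A.X) ⟶ B.X ⊗ A.X :=
  (α_ B.X A.X (B.X ⊗ A.X)).hom ≫
    (B.X ◁ (α_ A.X B.X A.X).inv) ≫
    (B.X ◁ ((β_ A.X B.X).hom ▷ A.X)) ≫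
    (B.X ◁ (α_ B.X A.X A.X).hom) ≫
    (α_ B.X B.X (A.X ⊗ A.X)).inv ≫ (B.mul ⊗ₘ A.mul)

/-- The unit of the opposite braided product `B ×⁻ A`. -/
noncomputable def bpOneNeg (A B : FrobeniusAlgebra C) : 𝟙_ C ⟶ B.X ⊗ A.X :=
  (λ_ (𝟙_ C)).inv ≫ (B.one ⊗ₘ A.one)

/-- The comultiplication of the opposite braided product `B ×⁻ A`: apply `δ_B ⊗ δ_A`,
rebracket, apply `id_B ⊗ (β_{A,B})⁻¹ ⊗ id_A` to the middle factors `B ⊗ A`, rebracket. -/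
noncomputable def bpComulNeg (A B : FrobeniusAlgebra C) :
    B.X ⊗ A.X ⟶ (B.X ⊗ A.X) ⊗ (B.X ⊗ A.X) :=
  (B.comul ⊗ₘ A.comul) ≫
    (α_ B.X B.X (A.X ⊗ A.X)).hom ≫
    (B.X ◁ (α_ B.X A.X A.X).inv) ≫
    (B.X ◁ ((β_ A.X B.X).inv ▷ A.X)) ≫
    (B.X ◁ (α_ A.X B.X A.X).hom) ≫
    (α_ B.X A.X (B.X ⊗ A.X)).inv

/-- The counit of the opposite braided product `B ×⁻ A`. -/
noncomputable def bpCounitNeg (A B : FrobeniusAlgebra C) : B.X ⊗ A.X ⟶ 𝟙_ C :=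
  (B.counit ⊗ₘ A.counit) ≫ (λ_ (𝟙_ C)).hom

/-!
Both braided products are built from the middle-four interchange `tensorμ` and its inverse
`tensorδ`, so the multiplicativity of `β_{A,B}` reduces to naturality of the braiding plus the
identity `(β_{W,Y} ⊗ β_{X,Z}) ≫ tensorμ = tensorδ ≫ β_{W⊗X,Y⊗Z}`, a consequence of the hexagon
axioms; comultiplicativity is the same identity read backwards. Units and counits only need
that `β_{𝟙,𝟙}` is trivial up to the unitors.
-/

open BraidedCategory

theorem tensorHom_braiding_comp_tensorμ (W X Y Z : C) :
    ((β_ W Y).hom ⊗ₘ (β_ X Z).hom) ≫ tensorμ Y W Z X =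
      tensorδ W X Y Z ≫ (β_ (W ⊗ X) (Y ⊗ Z)).hom := by
  simp [tensorμ, tensorδ, MonoidalCategory.tensorHom_def]

theorem tensorμ_comp_tensorHom_braiding (W X Y Z : C) :
    tensorμ W X Y Z ≫ ((β_ W Y).hom ⊗ₘ (β_ X Z).hom) =
      (β_ (W ⊗ X) (Y ⊗ Z)).hom ≫ tensorδ Y W Z X := by
  calc tensorμ W X Y Z ≫ ((β_ W Y).hom ⊗ₘ (β_ X Z).hom)
      = tensorμ W X Y Z ≫ ((β_ W Y).hom ⊗ₘ (β_ X Z).hom) ≫ tensorμ Y W Z X ≫ tensorδ Y W Z X := by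
        rw [tensorμ_tensorδ, Category.comp_id]
    _ = (β_ (W ⊗ X) (Y ⊗ Z)).hom ≫ tensorδ Y W Z X := by
        rw [← Category.assoc (_ ⊗ₘ _), tensorHom_braiding_comp_tensorμ, Category.assoc,
          tensorμ_tensorδ_assoc]

theorem leftUnitor_inv_comp_tensorHom_comp_braiding {X Y : C} (f : 𝟙_ C ⟶ X) (g : 𝟙_ C ⟶ Y) :
    (λ_ (𝟙_ C)).inv ≫ (f ⊗ₘ g) ≫ (β_ X Y).hom = (λ_ (𝟙_ C)).inv ≫ (g ⊗ₘ f) := by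
  rw [braiding_naturality, leftUnitor_inv_braiding_assoc, unitors_inv_equal]

theorem braiding_comp_tensorHom_comp_leftUnitor {X Y : C} (f : X ⟶ 𝟙_ C) (g : Y ⟶ 𝟙_ C) :
    (β_ X Y).hom ≫ (g ⊗ₘ f) ≫ (λ_ (𝟙_ C)).hom = (f ⊗ₘ g) ≫ (λ_ (𝟙_ C)).hom := by
  rw [← braiding_naturality_assoc, braiding_leftUnitor, unitors_equal]

theorem bpMul_eq_tensorδ_comp (A B : FrobeniusAlgebra C) :
    bpMul A B = tensorδ A.X A.X B.X B.X ≫ (A.mul ⊗ₘ B.mul) := by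
  simp [bpMul, tensorδ]

theorem bpMulNeg_eq_tensorμ_comp (A B : FrobeniusAlgebra C) :
    bpMulNeg A B = tensorμ B.X A.X B.X A.X ≫ (B.mul ⊗ₘ A.mul) := by
  simp [bpMulNeg, tensorμ]

theorem bpComul_eq_comp_tensorμ (A B : FrobeniusAlgebra C) :
    bpComul A B = (A.comul ⊗ₘ B.comul) ≫ tensorμ A.X A.X B.X B.X := by
  simp [bpComul, tensorμ]

theorem bpComulNeg_eq_comp_tensorδ (A B : FrobeniusAlgebra C) :
    bpComulNeg A B = (B.comul ⊗ₘ A.comul) ≫ tensorδ B.X A.X B.X A.X := by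
  simp [bpComulNeg, tensorδ]

/-- The braiding `β_{A,B} : A ⊗ B ⟶ B ⊗ A` is an isomorphism of Frobenius algebras
from the braided product `A ×⁺ B` to the opposite braided product `B ×⁻ A`: it
intertwines units, counits, multiplications and comultiplications. -/
theorem braiding_iso_braidedProduct_oppositeBraidedProduct (A B : FrobeniusAlgebra C) :
    (bpOne A B ≫ (β_ A.X B.X).hom = bpOneNeg A B) ∧
    ((β_ A.X B.X).hom ≫ bpCounitNeg A B = bpCounit A B) ∧
    (((β_ A.X B.X).hom ⊗ₘ (β_ A.X B.X).hom) ≫ bpMulNeg A B =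
      bpMul A B ≫ (β_ A.X B.X).hom) ∧
    (bpComul A B ≫ ((β_ A.X B.X).hom ⊗ₘ (β_ A.X B.X).hom) =
      (β_ A.X B.X).hom ≫ bpComulNeg A B) := by
  refine ⟨?_, ?_, ?_, ?_⟩
  · rw [bpOne, Category.assoc]
    exact leftUnitor_inv_comp_tensorHom_comp_braiding A.one B.one
  · exact braiding_comp_tensorHom_comp_leftUnitor A.counit B.counit
  · rw [bpMul_eq_tensorδ_comp, bpMulNeg_eq_tensorμ_comp, ← Category.assoc,
      tensorHom_braiding_comp_tensorμ, Category.assoc, Category.assoc, braiding_naturality]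
  · rw [bpComul_eq_comp_tensorμ, bpComulNeg_eq_comp_tensorδ, Category.assoc,
      tensorμ_comp_tensorHom_braiding, braiding_naturality_assoc]
end

section
/- Let a₁ < b₁, c₁ < d₁ and a₂ < b₂, c₂ < d₂ be real numbers determining nonempty open double cones O₁ = O(a₁,b₁;c₁,d₁) and O₂ = O(a₂,b₂;c₂,d₂) in ℝ². If every point of O₁ is spacelike separated from every point of O₂, then either (b₁ ≤ a₂ and d₂ ≤ c₁), i.e. O₁ lies in the left spacelike complement of O₂, or (b₂ ≤ a₁ and d₁ ≤ c₂), i.e. O₂ lies in the left spacelike complement of O₁. Conversely, either of these two conditions implies that every point of O₁ is spacelike separated from every point of O₂. -/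
/-!
In lightcone coordinates `u = t + x`, `v = t - x` one has `(Δt)² - (Δx)² = Δu Δv`, so spacelike
separation says `Δu Δv < 0`, and a double cone is the product of the open intervals `(a, b)` in `u`
and `(c, d)` in `v`. Fixing one pair of points, the signs of `Δu` and `Δv` are opposite; letting the
`u`-coordinates vary with the `v`-coordinates fixed (and vice versa) shows that each sign is the
same for all pairs. So the `u`-intervals of the two cones are strictly ordered one way and the
`v`-intervals the other way, which for nonempty open intervals means `b ≤ a'`.
-/

/-- Two points of two-dimensional Minkowski space `ℝ²` (coordinates `(t, x)`) are
spacelike separated iff `(t − t')² < (x − x')²`. -/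
def Spacelike (p q : ℝ × ℝ) : Prop :=
  (p.1 - q.1) ^ 2 < (p.2 - q.2) ^ 2

/-- The open double cone `O(a,b;c,d) = {(t,x) : a < t+x < b, c < t−x < d}`. -/
def DoubleCone (a b c d : ℝ) : Set (ℝ × ℝ) :=
  {p | a < p.1 + p.2 ∧ p.1 + p.2 < b ∧ c < p.1 - p.2 ∧ p.1 - p.2 < d}

open Set

theorem forall_Ioo_lt_Ioo_iff {α : Type*} [LinearOrder α] [DenselyOrdered α] {a₁ b₁ a₂ b₂ : α}
    (h₁ : a₁ < b₁) (h₂ : a₂ < b₂) :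
    (∀ x ∈ Ioo a₁ b₁, ∀ y ∈ Ioo a₂ b₂, x < y) ↔ b₁ ≤ a₂ := by
  refine ⟨fun h => ?_, fun h x hx y hy => hx.2.trans_le (h.trans hy.1.le)⟩
  by_contra! hlt
  obtain ⟨x, hax, hxb⟩ := exists_between (max_lt h₁ hlt)
  obtain ⟨y, hay, hyb⟩ := exists_between (lt_min ((le_max_right a₁ a₂).trans_lt hax) h₂)
  have hx : x ∈ Ioo a₁ b₁ := ⟨(le_max_left a₁ a₂).trans_lt hax, hxb⟩
  have hy : y ∈ Ioo a₂ b₂ := ⟨hay, hyb.trans_le (min_le_right x b₂)⟩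
  exact (h x hx y hy).not_gt (hyb.trans_le (min_le_left x b₂))

theorem forall_sub_mul_sub_neg_iff {α : Type*} [Ring α] [LinearOrder α] [IsStrictOrderedRing α]
    {I₁ J₁ I₂ J₂ : Set α} (hI₁ : I₁.Nonempty) (hJ₁ : J₁.Nonempty)
    (hI₂ : I₂.Nonempty) (hJ₂ : J₂.Nonempty) :
    (∀ u₁ ∈ I₁, ∀ v₁ ∈ J₁, ∀ u₂ ∈ I₂, ∀ v₂ ∈ J₂, (u₁ - u₂) * (v₁ - v₂) < 0) ↔
      ((∀ u₁ ∈ I₁, ∀ u₂ ∈ I₂, u₁ < u₂) ∧ ∀ v₂ ∈ J₂, ∀ v₁ ∈ J₁, v₂ < v₁) ∨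
        ((∀ u₂ ∈ I₂, ∀ u₁ ∈ I₁, u₂ < u₁) ∧ ∀ v₁ ∈ J₁, ∀ v₂ ∈ J₂, v₁ < v₂) := by
  constructor
  · intro h
    obtain ⟨u₁, hu₁⟩ := hI₁
    obtain ⟨v₁, hv₁⟩ := hJ₁
    obtain ⟨u₂, hu₂⟩ := hI₂
    obtain ⟨v₂, hv₂⟩ := hJ₂
    rcases mul_neg_iff.1 (h u₁ hu₁ v₁ hv₁ u₂ hu₂ v₂ hv₂) with ⟨hu, hv⟩ | ⟨hu, hv⟩
    · refine Or.inr ⟨fun y hy x hx => ?_, fun x hx y hy => ?_⟩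
      · exact sub_pos.1 (pos_of_mul_neg_left (h x hx v₁ hv₁ y hy v₂ hv₂) hv.le)
      · exact sub_neg.1 (neg_of_mul_neg_right (h u₁ hu₁ x hx u₂ hu₂ y hy) hu.le)
    · refine Or.inl ⟨fun x hx y hy => ?_, fun y hy x hx => ?_⟩
      · exact sub_neg.1 (neg_of_mul_neg_left (h x hx v₁ hv₁ y hy v₂ hv₂) hv.le)
      · exact sub_pos.1 (pos_of_mul_neg_right (h u₁ hu₁ x hx u₂ hu₂ y hy) hu.le)
  · rintro (⟨hu, hv⟩ | ⟨hu, hv⟩) u₁ hu₁ v₁ hv₁ u₂ hu₂ v₂ hv₂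
    · exact mul_neg_of_neg_of_pos (sub_neg.2 (hu u₁ hu₁ u₂ hu₂)) (sub_pos.2 (hv v₂ hv₂ v₁ hv₁))
    · exact mul_neg_of_pos_of_neg (sub_pos.2 (hu u₂ hu₂ u₁ hu₁)) (sub_neg.2 (hv v₁ hv₁ v₂ hv₂))

theorem spacelike_lightcone_iff (u₁ v₁ u₂ v₂ : ℝ) :
    Spacelike ((u₁ + v₁) / 2, (u₁ - v₁) / 2) ((u₂ + v₂) / 2, (u₂ - v₂) / 2) ↔
      (u₁ - u₂) * (v₁ - v₂) < 0 := by
  have h : ((u₁ + v₁) / 2 - (u₂ + v₂) / 2) ^ 2 - ((u₁ - v₁) / 2 - (u₂ - v₂) / 2) ^ 2 =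
      (u₁ - u₂) * (v₁ - v₂) := by ring
  rw [Spacelike, ← sub_neg, h]

theorem forall_mem_doubleCone_iff {a b c d : ℝ} {P : ℝ × ℝ → Prop} :
    (∀ p ∈ DoubleCone a b c d, P p) ↔
      ∀ u ∈ Ioo a b, ∀ v ∈ Ioo c d, P ((u + v) / 2, (u - v) / 2) := by
  constructor
  · rintro h u ⟨hau, hub⟩ v ⟨hcv, hvd⟩
    exact h _ ⟨by linarith, by linarith, by linarith, by linarith⟩
  · rintro h p ⟨hau, hub, hcv, hvd⟩
    convert h _ ⟨hau, hub⟩ _ ⟨hcv, hvd⟩ using 1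
    ext <;> ring

theorem forall_doubleCone_spacelike_iff {a₁ b₁ c₁ d₁ a₂ b₂ c₂ d₂ : ℝ} :
    (∀ p ∈ DoubleCone a₁ b₁ c₁ d₁, ∀ q ∈ DoubleCone a₂ b₂ c₂ d₂, Spacelike p q) ↔
      ∀ u₁ ∈ Ioo a₁ b₁, ∀ v₁ ∈ Ioo c₁ d₁, ∀ u₂ ∈ Ioo a₂ b₂, ∀ v₂ ∈ Ioo c₂ d₂,
        (u₁ - u₂) * (v₁ - v₂) < 0 := by
  simp only [forall_mem_doubleCone_iff, spacelike_lightcone_iff]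

/-- Two nonempty open double cones `O₁ = O(a₁,b₁;c₁,d₁)` and `O₂ = O(a₂,b₂;c₂,d₂)` in
two-dimensional Minkowski space are pointwise spacelike separated if and only if
either `O₁` lies in the left spacelike complement of `O₂` (`b₁ ≤ a₂` and `d₂ ≤ c₁`)
or `O₂` lies in the left spacelike complement of `O₁` (`b₂ ≤ a₁` and `d₁ ≤ c₂`). -/
theorem doubleCones_spacelike_iff_left_or_right
    (a₁ b₁ c₁ d₁ a₂ b₂ c₂ d₂ : ℝ)
    (h₁ : a₁ < b₁) (h₁' : c₁ < d₁) (h₂ : a₂ < b₂) (h₂' : c₂ < d₂) :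
    (∀ p ∈ DoubleCone a₁ b₁ c₁ d₁, ∀ q ∈ DoubleCone a₂ b₂ c₂ d₂, Spacelike p q) ↔
      ((b₁ ≤ a₂ ∧ d₂ ≤ c₁) ∨ (b₂ ≤ a₁ ∧ d₁ ≤ c₂)) := by
  rw [forall_doubleCone_spacelike_iff, forall_sub_mul_sub_neg_iff (nonempty_Ioo.2 h₁)
    (nonempty_Ioo.2 h₁') (nonempty_Ioo.2 h₂) (nonempty_Ioo.2 h₂'), forall_Ioo_lt_Ioo_iff h₁ h₂,
    forall_Ioo_lt_Ioo_iff h₂ h₁, forall_Ioo_lt_Ioo_iff h₁' h₂', forall_Ioo_lt_Ioo_iff h₂' h₁']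
end

section
/- Let H be a complex Hilbert space and B an isotone assignment of subsets of the bounded operators on H to subsets of ℝ². For double cones O₁ = O(a₁,b₁;c₁,d₁) and O₂ = O(a₂,b₂;c₂,d₂), if b₁ ≤ a₂ and d₂ ≤ c₁ (i.e. O₁ lies in the left spacelike complement of O₂), or symmetrically b₂ ≤ a₁ and d₁ ≤ c₂, then every operator in B⁺_loc(O₁) commutes with every operator in B⁺_loc(O₂). In other words, the net O ↦ B⁺_loc(O) of relative commutants of nested wedge algebras is local. -/
/-- The left wedge of the double cone `O(a,b;c,d)`: `{(t,x) : t+x < a, t−x > d}`. -/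
def LeftWedge (a d : ℝ) : Set (ℝ × ℝ) :=
  {p | p.1 + p.2 < a ∧ p.1 - p.2 > d}

/-- The causal complement of the right wedge of the double cone `O(a,b;c,d)`:
`W_R' = {(t,x) : t+x < b, t−x > c}`. -/
def RightWedgeCompl (b c : ℝ) : Set (ℝ × ℝ) :=
  {p | p.1 + p.2 < b ∧ p.1 - p.2 > c}

/-- For an isotone net `B` on a Hilbert space `H` and a double cone `O = O(a,b;c,d)`,
the maximal relatively local subnet algebra
`B⁺_loc(O) := centralizer(B(W_L)) ∩ B(W_R')`. -/
def BlocPlus {H : Type*} [NormedAddCommGroup H] [InnerProductSpace ℂ H]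
    (B : Set (ℝ × ℝ) → Set (H →L[ℂ] H)) (a b c d : ℝ) : Set (H →L[ℂ] H) :=
  Set.centralizer (B (LeftWedge a d)) ∩ B (RightWedgeCompl b c)

theorem rightWedgeCompl_subset_leftWedge {b c a' d' : ℝ} (hb : b ≤ a') (hd : d' ≤ c) :
    RightWedgeCompl b c ⊆ LeftWedge a' d' :=
  fun _ ⟨hplus, hminus⟩ => ⟨hplus.trans_le hb, hd.trans_lt hminus⟩

theorem mul_comm_of_mem_blocPlus_of_left {H : Type*} [NormedAddCommGroup H]
    [InnerProductSpace ℂ H] {B : Set (ℝ × ℝ) → Set (H →L[ℂ] H)}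
    (isotone : ∀ S S' : Set (ℝ × ℝ), S ⊆ S' → B S ⊆ B S')
    {a₁ b₁ c₁ d₁ a₂ b₂ c₂ d₂ : ℝ} (hb : b₁ ≤ a₂) (hd : d₂ ≤ c₁)
    {x y : H →L[ℂ] H} (hx : x ∈ BlocPlus B a₁ b₁ c₁ d₁) (hy : y ∈ BlocPlus B a₂ b₂ c₂ d₂) :
    x * y = y * x :=
  hy.1 x (isotone _ _ (rightWedgeCompl_subset_leftWedge hb hd) hx.2)

theorem BlocPlus_local_general {H : Type*} [NormedAddCommGroup H] [InnerProductSpace ℂ H]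
    (B : Set (ℝ × ℝ) → Set (H →L[ℂ] H))
    (isotone : ∀ S S' : Set (ℝ × ℝ), S ⊆ S' → B S ⊆ B S')
    (a₁ b₁ c₁ d₁ a₂ b₂ c₂ d₂ : ℝ)
    (hsep : (b₁ ≤ a₂ ∧ d₂ ≤ c₁) ∨ (b₂ ≤ a₁ ∧ d₁ ≤ c₂)) :
    ∀ x ∈ BlocPlus B a₁ b₁ c₁ d₁, ∀ y ∈ BlocPlus B a₂ b₂ c₂ d₂, x * y = y * x := by
  intro x hx y hy
  rcases hsep with ⟨hb, hd⟩ | ⟨hb, hd⟩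
  · exact mul_comm_of_mem_blocPlus_of_left isotone hb hd hx hy
  · exact (mul_comm_of_mem_blocPlus_of_left isotone hb hd hy hx).symm

/-- For an isotone net `B` of sets of bounded operators on a complex Hilbert space, if
the double cone `O₁` lies in the left spacelike complement of `O₂` (or symmetrically),
then every operator in `B⁺_loc(O₁)` commutes with every operator in `B⁺_loc(O₂)`:
the net `O ↦ B⁺_loc(O)` of relative commutants of nested wedge algebras is local. -/
theorem BlocPlus_local {H : Type*} [NormedAddCommGroup H] [InnerProductSpace ℂ H]
    [CompleteSpace H]
    (B : Set (ℝ × ℝ) → Set (H →L[ℂ] H))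
    (isotone : ∀ S S' : Set (ℝ × ℝ), S ⊆ S' → B S ⊆ B S')
    (a₁ b₁ c₁ d₁ a₂ b₂ c₂ d₂ : ℝ)
    (h₁ : a₁ < b₁) (h₁' : c₁ < d₁) (h₂ : a₂ < b₂) (h₂' : c₂ < d₂)
    (hsep : (b₁ ≤ a₂ ∧ d₂ ≤ c₁) ∨ (b₂ ≤ a₁ ∧ d₁ ≤ c₂)) :
    ∀ x ∈ BlocPlus B a₁ b₁ c₁ d₁, ∀ y ∈ BlocPlus B a₂ b₂ c₂ d₂, x * y = y * x :=
  BlocPlus_local_general B isotone a₁ b₁ c₁ d₁ a₂ b₂ c₂ d₂ hsep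
end

section
/- Let M, K, T be finite index types, S : Matrix M T ℂ a unitary matrix (Sᴴ S = 1 and S Sᴴ = 1), S' : Matrix K T ℂ, and k₀ ∈ K a distinguished index such that S'_{k₀,t} ≠ 0 for all t ∈ T. Define fusion coefficients N(k)_{m₁,m₃} := Σ_{t ∈ T} S_{m₁,t} · S'_{k,t} · conj(S_{m₃,t}) / S'_{k₀,t} (the generalized Verlinde formula). Then the unitary matrix S diagonalizes the fusion coefficients: for all k ∈ K and t, t' ∈ T, Σ_{m₁,m₃ ∈ M} conj(S_{m₁,t}) · N(k)_{m₁,m₃} · S_{m₃,t'} equals S'_{k,t}/S'_{k₀,t} if t = t' and equals 0 if t ≠ t'. -/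
/-! The Verlinde formula says exactly that the matrix `N(k)` equals `S D Sᴴ` with
`D = diag (S'_{k,t} / S'_{k₀,t})`; since `Sᴴ S = 1`, conjugating by `S` gives back `D`. -/

open scoped Matrix ComplexConjugate

namespace Matrix

variable {m n R : Type*} [Fintype n]

theorem mul_mul_apply_eq_sum_sum [Fintype m] [NonUnitalNonAssocSemiring R]
    {l o : Type*} [Fintype l] (A : Matrix l m R) (B : Matrix m n R) (C : Matrix n o R)
    (i : l) (j : o) :
    (A * B * C) i j = ∑ a : m, ∑ b : n, A i a * B a b * C b j := by
  simp only [mul_apply, Finset.sum_mul]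
  exact Finset.sum_comm

theorem mul_diagonal_mul_conjTranspose_apply [DecidableEq n] [Semiring R] [StarRing R]
    (U : Matrix m n R) (d : n → R) (i j : m) :
    (U * diagonal d * Uᴴ) i j = ∑ t : n, U i t * d t * star (U j t) := by
  simp [mul_apply, diagonal_apply]

theorem conjTranspose_mul_mul_mul_of_conjTranspose_mul_self_eq_one [Fintype m] [DecidableEq n]
    [Semiring R] [StarRing R] {U : Matrix m n R} (hU : Uᴴ * U = 1) (A : Matrix n n R) :
    Uᴴ * (U * A * Uᴴ) * U = A :=
  calc Uᴴ * (U * A * Uᴴ) * U = (Uᴴ * U) * A * (Uᴴ * U) := by simp only [Matrix.mul_assoc]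
    _ = A := by rw [hU, Matrix.one_mul, Matrix.mul_one]

end Matrix

open Matrix in
theorem generalized_verlinde_diagonalization_general
    {M K T : Type*} [Fintype M] [Fintype K] [Fintype T]
    [DecidableEq T]
    (S : Matrix M T ℂ) (hS₁ : Sᴴ * S = 1)
    (S' : Matrix K T ℂ) (k₀ : K)
    (N : K → M → M → ℂ)
    (hN : ∀ (k : K) (m₁ m₃ : M),
      N k m₁ m₃ = ∑ t : T, S m₁ t * S' k t * conj (S m₃ t) / S' k₀ t) :
    ∀ (k : K) (t t' : T),
      (∑ m₁ : M, ∑ m₃ : M, conj (S m₁ t) * N k m₁ m₃ * S m₃ t') =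
        if t = t' then S' k t / S' k₀ t else 0 := by
  intro k t t'
  set d : T → ℂ := fun s ↦ S' k s / S' k₀ s
  have hNk : Matrix.of (N k) = S * diagonal d * Sᴴ := by
    ext m₁ m₃
    rw [mul_diagonal_mul_conjTranspose_apply, of_apply, hN]
    exact Finset.sum_congr rfl fun s _ ↦ by simp only [d, starRingEnd_apply]; ring
  calc (∑ m₁ : M, ∑ m₃ : M, conj (S m₁ t) * N k m₁ m₃ * S m₃ t')
      = (Sᴴ * Matrix.of (N k) * S) t t' := by
        rw [mul_mul_apply_eq_sum_sum]; rfl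
    _ = diagonal d t t' := by
        rw [hNk, conjTranspose_mul_mul_mul_of_conjTranspose_mul_self_eq_one hS₁]
    _ = if t = t' then S' k t / S' k₀ t else 0 := diagonal_apply d t t'

/-- Generalized Verlinde formula / diagonalization of the bimodule fusion rules.
Let `M`, `K`, `T` be finite index types (`M` indexing irreducible `A`-`B`-bimodules,
`K` the irreducible `B`-`B`-bimodules with distinguished element `k₀` the trivial
bimodule, and `T` the pairs of charged fields), `S : Matrix M T ℂ` unitary,
`S' : Matrix K T ℂ` with `S' k₀ t ≠ 0` for all `t`.  Define the fusion coefficients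
`N(k)_{m₁,m₃} := Σ_t S_{m₁,t} S'_{k,t} conj(S_{m₃,t}) / S'_{k₀,t}`.  Then `S`
diagonalizes them:
`Σ_{m₁,m₃} conj(S_{m₁,t}) N(k)_{m₁,m₃} S_{m₃,t'} = δ_{t,t'} · S'_{k,t}/S'_{k₀,t}`. -/
theorem generalized_verlinde_diagonalization
    {M K T : Type*} [Fintype M] [Fintype K] [Fintype T]
    [DecidableEq M] [DecidableEq T]
    (S : Matrix M T ℂ) (hS₁ : Sᴴ * S = 1) (hS₂ : S * Sᴴ = 1)
    (S' : Matrix K T ℂ) (k₀ : K) (hk₀ : ∀ t : T, S' k₀ t ≠ 0)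
    (N : K → M → M → ℂ)
    (hN : ∀ (k : K) (m₁ m₃ : M),
      N k m₁ m₃ = ∑ t : T, S m₁ t * S' k t * conj (S m₃ t) / S' k₀ t) :
    ∀ (k : K) (t t' : T),
      (∑ m₁ : M, ∑ m₃ : M, conj (S m₁ t) * N k m₁ m₃ * S m₃ t') =
        if t = t' then S' k t / S' k₀ t else 0 :=
  generalized_verlinde_diagonalization_general S hS₁ S' k₀ N hN
end
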